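/- (Bounded difference property.) Let A ∈ {0,1}^{N×N} have all row sums and column sums at most d_max, let the units be partitioned into classes with P ∈ ℝ^{N×N} the block-averaging projection matrix P_{ij} = 1{k(i)=k(j)}/|Π_{k(i)}|, and define b(x) = (1/N)·xᵀAᵀ(I−P)Ax for x ∈ {0,1}^N (so that b(x) = (1/N)Σ_i((Ax)_i − class average of Ax)²). Then for any x, x′ ∈ {0,1}^N differing in exactly one coordinate, |b(x) − b(x′)| ≤ (2·d_max² + 2·d_max)/N. -/
import Mathlib


open Finset Matrix

/-- Bounded difference property: Let `A ∈ {0,1}^{N×N}` have all row and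
column sums at most `d_max`, let `P` be the block-averaging projection for a partition of
the units into classes (`P_{ij} = 1{k(i)=k(j)}/|Π_{k(i)}|`), and let
`b(x) = (1/N) xᵀ Aᵀ (I − P) A x`. Then for binary vectors `x, x'` differing in exactly one
coordinate, `|b(x) − b(x')| ≤ (2 d_max² + 2 d_max)/N`. -/
theorem stmt10 (N K dmax : ℕ) (A : Matrix (Fin N) (Fin N) ℝ)
    (hbin : ∀ i j, A i j = 0 ∨ A i j = 1)
    (hrow : ∀ i, ∑ j, A i j ≤ (dmax : ℝ))
    (hcol : ∀ j, ∑ i, A i j ≤ (dmax : ℝ))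
    (k : Fin N → Fin K)
    (P : Matrix (Fin N) (Fin N) ℝ)
    (hP : ∀ i j, P i j = (if k i = k j then (1:ℝ) else 0) /
        ((Finset.univ.filter fun l => k l = k i).card : ℝ))
    (b : (Fin N → ℝ) → ℝ)
    (hb : ∀ x, b x = (1 / (N : ℝ)) * (x ⬝ᵥ ((Aᵀ * (1 - P) * A) *ᵥ x)))
    (x x' : Fin N → ℝ)
    (hx : ∀ i, x i = 0 ∨ x i = 1) (hx' : ∀ i, x' i = 0 ∨ x' i = 1)
    (hdiff : ∃! i, x i ≠ x' i) :
    |b x - b x'| ≤ (2 * (dmax : ℝ) ^ 2 + 2 * (dmax : ℝ)) / N := by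
  obtain ⟨i0, hi0, huniq⟩ := hdiff
  have hN : 0 < N := i0.pos
  have hNR : (0:ℝ) < N := by exact_mod_cast hN
  have hdnn : (0:ℝ) ≤ (dmax : ℝ) := Nat.cast_nonneg _
  set M : Matrix (Fin N) (Fin N) ℝ := Aᵀ * (1 - P) * A with hM
  have hAnn : ∀ i j, 0 ≤ A i j := by
    intro i j; rcases hbin i j with h | h <;> rw [h] <;> norm_num
  -- P entries nonneg, rows sum to 1
  have hPnn : ∀ i j, 0 ≤ P i j := by
    intro i j; rw [hP i j]
    apply div_nonneg
    · split <;> norm_num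
    · positivity
  have hProw : ∀ i, ∑ j, P i j = 1 := by
    intro i
    have hcard : (0:ℝ) < ((Finset.univ.filter fun l => k l = k i).card : ℝ) := by
      have hmem : i ∈ Finset.univ.filter fun l => k l = k i := by simp
      have := Finset.card_pos.mpr ⟨i, hmem⟩
      exact_mod_cast this
    have hsum : (∑ j, if k i = k j then (1:ℝ) else 0)
        = ((Finset.univ.filter fun l => k l = k i).card : ℝ) := by
      simp [eq_comm]
    calc ∑ j, P i j = (∑ j, if k i = k j then (1:ℝ) else 0) /
          ((Finset.univ.filter fun l => k l = k i).card : ℝ) := by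
            rw [Finset.sum_div]; exact Finset.sum_congr rfl fun j _ => hP i j
      _ = 1 := by rw [hsum]; field_simp
  -- bounds for A *ᵥ v with binary v
  have hAv : ∀ v : Fin N → ℝ, (∀ i, v i = 0 ∨ v i = 1) →
      ∀ j, 0 ≤ (A *ᵥ v) j ∧ (A *ᵥ v) j ≤ (dmax : ℝ) := by
    intro v hv j
    have h0 : ∀ l, 0 ≤ v l := fun l => by rcases hv l with h|h <;> rw [h] <;> norm_num
    have h1 : ∀ l, v l ≤ 1 := fun l => by rcases hv l with h|h <;> rw [h] <;> norm_num
    constructor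
    · rw [show (A *ᵥ v) j = ∑ l, A j l * v l from rfl]
      exact Finset.sum_nonneg fun l _ => mul_nonneg (hAnn j l) (h0 l)
    · calc (A *ᵥ v) j = ∑ l, A j l * v l := rfl
        _ ≤ ∑ l, A j l := Finset.sum_le_sum fun l _ =>
              mul_le_of_le_one_right (hAnn j l) (h1 l)
        _ ≤ (dmax : ℝ) := hrow j
  -- (1-P) A v is bounded by dmax in absolute value
  have hw : ∀ v : Fin N → ℝ, (∀ i, v i = 0 ∨ v i = 1) →
      ∀ j, |((1 - P) *ᵥ (A *ᵥ v)) j| ≤ (dmax : ℝ) := by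
    intro v hv j
    have h := hAv v hv
    have hPv_le : (P *ᵥ (A *ᵥ v)) j ≤ (dmax : ℝ) := by
      calc (P *ᵥ (A *ᵥ v)) j = ∑ l, P j l * (A *ᵥ v) l := rfl
        _ ≤ ∑ l, P j l * (dmax : ℝ) := Finset.sum_le_sum fun l _ =>
              mul_le_mul_of_nonneg_left (h l).2 (hPnn j l)
        _ = (dmax : ℝ) := by rw [← Finset.sum_mul, hProw j, one_mul]
    have hPv_nn : 0 ≤ (P *ᵥ (A *ᵥ v)) j := by
      rw [show (P *ᵥ (A *ᵥ v)) j = ∑ l, P j l * (A *ᵥ v) l from rfl]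
      exact Finset.sum_nonneg fun l _ => mul_nonneg (hPnn j l) (h l).1
    have heq : ((1 - P) *ᵥ (A *ᵥ v)) j = (A *ᵥ v) j - (P *ᵥ (A *ᵥ v)) j := by
      rw [Matrix.sub_mulVec, Matrix.one_mulVec]; rfl
    rw [heq, abs_le]
    constructor <;> nlinarith [(h j).1, (h j).2]
  -- bound on (M v) i0
  have hMv : ∀ v : Fin N → ℝ, (∀ i, v i = 0 ∨ v i = 1) →
      |(M *ᵥ v) i0| ≤ (dmax:ℝ)^2 := by
    intro v hv
    have hMv' : (M *ᵥ v) i0 = ∑ j, A j i0 * ((1 - P) *ᵥ (A *ᵥ v)) j := by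
      have : M *ᵥ v = Aᵀ *ᵥ ((1 - P) *ᵥ (A *ᵥ v)) := by
        rw [Matrix.mulVec_mulVec, Matrix.mulVec_mulVec, hM, Matrix.mul_assoc]
      rw [this]
      rfl
    rw [hMv']
    calc |∑ j, A j i0 * ((1 - P) *ᵥ (A *ᵥ v)) j|
        ≤ ∑ j, |A j i0 * ((1 - P) *ᵥ (A *ᵥ v)) j| := Finset.abs_sum_le_sum_abs _ _
      _ ≤ ∑ j, A j i0 * (dmax : ℝ) := Finset.sum_le_sum fun j _ => by
            rw [abs_mul, abs_of_nonneg (hAnn j i0)]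
            exact mul_le_mul_of_nonneg_left (hw v hv j) (hAnn j i0)
      _ = (∑ j, A j i0) * (dmax : ℝ) := by rw [Finset.sum_mul]
      _ ≤ (dmax : ℝ) * (dmax : ℝ) := mul_le_mul_of_nonneg_right (hcol i0) hdnn
      _ = (dmax : ℝ)^2 := (sq _).symm
  -- symmetry of M
  have hPsymm : Pᵀ = P := by
    ext i j
    rw [Matrix.transpose_apply, hP, hP]
    by_cases h : k i = k j
    · have hfe : (Finset.univ.filter fun l => k l = k j)
          = (Finset.univ.filter fun l => k l = k i) := by
        apply Finset.filter_congr; intro l _; rw [h]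
      rw [hfe, if_pos h.symm, if_pos h]
    · rw [if_neg h, if_neg fun hh => h hh.symm, zero_div, zero_div]
  have hMsymm : ∀ i j, M i j = M j i := by
    have hMt : Mᵀ = M := by
      rw [hM, Matrix.transpose_mul, Matrix.transpose_mul, Matrix.transpose_transpose,
        Matrix.transpose_sub, Matrix.transpose_one, hPsymm, Matrix.mul_assoc]
    intro i j
    exact congrFun (congrFun hMt.symm i) j
  -- decomposition x = x' + c e_{i0}
  set c := x i0 - x' i0 with hc
  have hxeq : x = x' + Pi.single i0 c := by
    funext j
    by_cases h : j = i0
    · subst h; simp [hc]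
    · have hxx : x j = x' j := by by_contra hne; exact h (huniq j hne)
      simp [Pi.single_eq_of_ne h, hxx]
  have hcabs : |c| = 1 := by
    rcases hx i0 with h1|h1 <;> rcases hx' i0 with h2|h2 <;>
      first
        | exact absurd (h1.trans h2.symm) hi0
        | (rw [hc, h1, h2]; norm_num)
  have key : x ⬝ᵥ (M *ᵥ x) - x' ⬝ᵥ (M *ᵥ x') = c * ((M *ᵥ x) i0 + (M *ᵥ x') i0) := by
    have e2 : ∀ w : Fin N → ℝ, Pi.single i0 c ⬝ᵥ w = c * w i0 := fun w =>
      single_dotProduct _ _ _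
    have e3 : ∀ w : Fin N → ℝ, w ⬝ᵥ (M *ᵥ Pi.single i0 c) = c * (M *ᵥ w) i0 := by
      intro w
      rw [Matrix.mulVec_single]
      show ∑ j, w j * (M j i0 * c) = c * ∑ j, M i0 j * w j
      rw [Finset.mul_sum]
      exact Finset.sum_congr rfl fun j _ => by rw [hMsymm i0 j]; ring
    rw [hxeq, Matrix.mulVec_add, add_dotProduct, dotProduct_add,
      dotProduct_add, e2, e2, e3]
    simp only [Pi.add_apply]
    ring
  -- conclude
  rw [hb x, hb x']
  have hfin : (1 / (N:ℝ)) * (x ⬝ᵥ (M *ᵥ x)) - (1 / (N:ℝ)) * (x' ⬝ᵥ (M *ᵥ x'))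
      = (1 / (N:ℝ)) * (c * ((M *ᵥ x) i0 + (M *ᵥ x') i0)) := by rw [← mul_sub, key]
  have habs : |(M *ᵥ x) i0 + (M *ᵥ x') i0| ≤ 2 * (dmax:ℝ)^2 := by
    calc |(M *ᵥ x) i0 + (M *ᵥ x') i0| ≤ |(M *ᵥ x) i0| + |(M *ᵥ x') i0| := abs_add_le _ _
      _ ≤ (dmax:ℝ)^2 + (dmax:ℝ)^2 := add_le_add (hMv x hx) (hMv x' hx')
      _ = 2 * (dmax:ℝ)^2 := by ring
  have hS : |c * ((M *ᵥ x) i0 + (M *ᵥ x') i0)| ≤ 2 * (dmax:ℝ)^2 := by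
    rw [abs_mul, hcabs, one_mul]; exact habs
  rw [hfin, abs_mul]
  calc |1/(N:ℝ)| * |c * ((M *ᵥ x) i0 + (M *ᵥ x') i0)|
      ≤ |1/(N:ℝ)| * (2 * (dmax:ℝ)^2) := mul_le_mul_of_nonneg_left hS (abs_nonneg _)
    _ = (2 * (dmax:ℝ)^2) / N := by
        rw [abs_of_pos (by positivity : (0:ℝ) < 1/(N:ℝ))]; ring
    _ ≤ (2 * (dmax : ℝ) ^ 2 + 2 * (dmax : ℝ)) / N := by
        gcongr
        nlinarith [hdnn]
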